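/- Let P be a probability distribution on (ZMod 2) × (ZMod 2), let C₁, C₂ be F₂-linear subspaces of (ZMod 2)ⁿ, and let D = C₁ ⊓ C₂. On a probability space let δ be uniform on D and Δ = (Δ₁,…,Δₙ) i.i.d. with law P, independent of δ, and set Zᵢ = (δᵢ, δᵢ) + Δᵢ ∈ (ZMod 2)². Then for any decoder g : ((ZMod 2)²)ⁿ → D, if ε = P[g(Z) ≠ δ], then (1 − ε) · log |D| ≤ n · (log 2 + H_P(Δ⁽¹⁾ + Δ⁽²⁾) − H_P) + log 2, where H_P is the entropy of P and H_P(Δ⁽¹⁾ + Δ⁽²⁾) is the entropy of the sum of the two coordinates of one draw from P. (This is the finite-blocklength form of the necessary condition log₂|C₁ ∩ C₂|/n ≤ I[X₀⁽¹⁾; X₀⁽¹⁾ + X₀⁽²⁾, Y₀].) -/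

import Mathlib

open MeasureTheory

/-- Shannon entropy (in nats) of a random variable `X` taking values in a finite type,
`H[X] = ∑ s, (-P[X = s]) * log P[X = s]`. -/
noncomputable def entropy {Ω S : Type*} [MeasurableSpace Ω] [Fintype S]
    (μ : Measure Ω) (X : Ω → S) : ℝ :=
  ∑ s : S, Real.negMulLog (μ (X ⁻¹' {s})).toReal

/-- Conditional Shannon entropy (in nats), `H[X | Z] = H[(X, Z)] - H[Z]` (chain rule). -/
noncomputable def condEntropy {Ω S T : Type*} [MeasurableSpace Ω] [Fintype S] [Fintype T]
    (μ : Measure Ω) (X : Ω → S) (Z : Ω → T) : ℝ :=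
  entropy μ (fun ω => (X ω, Z ω)) - entropy μ Z

/-- Shannon entropy (in nats) of a probability distribution on a finite type. -/
noncomputable def distEntropy {S : Type*} [Fintype S] (P : PMF S) : ℝ :=
  ∑ s : S, Real.negMulLog (P s).toReal

/-- Shannon entropy (in nats), under a single draw `(Δ⁽¹⁾, Δ⁽²⁾) ∼ P`, of the sum
`Δ⁽¹⁾ + Δ⁽²⁾` of the two coordinates. -/
noncomputable def distEntropySum (P : PMF (ZMod 2 × ZMod 2)) : ℝ :=
  ∑ b : ZMod 2,
    Real.negMulLog (∑ a : ZMod 2 × ZMod 2, if a.1 + a.2 = b then P a else 0).toReal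

/-
Everything is a function of the pair `(δ, Δ)`, whose law on the finite set of pairs (codeword,
noise) is the product of the uniform law on `D` and of `P^⊗n`; we work with this law as a real
weight function. As `(δ, Δ) ↦ (δ, Z)` is injective, `H(δ, Z) = H(δ, Δ) = log |D| + n H_P`.
Fano's inequality gives `H(δ, Z) ≤ H(Z) + log 2 + ε log |D|`, and subadditivity gives
`H(Z) ≤ ∑ⱼ H(Zⱼ) ≤ n (log 2 + H_P(Δ⁽¹⁾ + Δ⁽²⁾))`: each `Zⱼ` is determined by its first coordinate
and by `Zⱼ⁽¹⁾ + Zⱼ⁽²⁾ = Δⱼ⁽¹⁾ + Δⱼ⁽²⁾`.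
-/

open Real Finset

section Gibbs

variable {S : Type*} [Fintype S] {p q : S → ℝ}

theorem sum_negMulLog_le_neg_sum_mul_log (hp : 0 ≤ p) (hq : 0 ≤ q)
    (hpq : ∀ s, p s ≠ 0 → q s ≠ 0) (hp1 : ∑ s, p s = 1) (hq1 : ∑ s, q s ≤ 1) :
    ∑ s, negMulLog (p s) ≤ -∑ s, p s * log (q s) := by
  -- pointwise `p log (q / p) ≤ q - p`, from `log x ≤ x - 1`
  have key : ∀ s, negMulLog (p s) + p s * log (q s) ≤ q s - p s := by
    intro s
    rcases (hp s).eq_or_lt with h | hps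
    · simpa [← h] using hq s
    have hqs : 0 < q s := (hq s).lt_of_ne (hpq s hps.ne').symm
    have := mul_le_mul_of_nonneg_left (log_le_sub_one_of_pos (div_pos hqs hps)) hps.le
    rw [log_div hqs.ne' hps.ne', mul_sub_one, mul_div_cancel₀ _ hps.ne'] at this
    simp only [negMulLog]
    linarith
  have := Finset.sum_le_sum fun s (_ : s ∈ univ) => key s
  rw [Finset.sum_add_distrib, Finset.sum_sub_distrib, hp1] at this
  linarith

theorem sum_negMulLog_le_log_card [DecidableEq S] (hp : 0 ≤ p) (hp1 : ∑ s, p s = 1)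
    (A : Finset S) (hA : ∀ s, p s ≠ 0 → s ∈ A) :
    ∑ s, negMulLog (p s) ≤ log #A := by
  obtain ⟨s₀, hs₀⟩ : ∃ s, p s ≠ 0 := by
    by_contra! h
    simp [h] at hp1
  have hcard : (0 : ℝ) < #A := by exact_mod_cast Finset.card_pos.2 ⟨s₀, hA s₀ hs₀⟩
  let q : S → ℝ := fun s => if s ∈ A then (#A : ℝ)⁻¹ else 0
  have hq1 : ∑ s, q s = 1 := by
    simp [q, Finset.sum_ite_mem, hcard.ne']
  have hlog : ∀ s, p s * log (q s) = -(p s * log #A) := by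
    intro s
    by_cases hps : p s = 0
    · simp [hps]
    · simp [q, hA s hps, log_inv]
  calc ∑ s, negMulLog (p s) ≤ -∑ s, p s * log (q s) :=
        sum_negMulLog_le_neg_sum_mul_log hp
          (fun s => by positivity) (fun s hs => by simp [q, hA s hs, hcard.ne']) hp1 hq1.le
    _ = log #A := by simp [hlog, ← Finset.sum_mul, hp1]

end Gibbs

section WeightedEntropy

variable {I S T : Type*} [Fintype I] [DecidableEq S] [DecidableEq T] {w : I → ℝ}

noncomputable def fiberMass (w : I → ℝ) (X : I → S) (s : S) : ℝ :=
  ∑ i, if X i = s then w i else 0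

noncomputable def weightedEntropy [Fintype S] (w : I → ℝ) (X : I → S) : ℝ :=
  ∑ s, negMulLog (fiberMass w X s)

theorem fiberMass_nonneg (hw : 0 ≤ w) (X : I → S) (s : S) : 0 ≤ fiberMass w X s :=
  Finset.sum_nonneg fun i _ => by split_ifs <;> first | exact hw i | rfl

theorem fiberMass_eq_zero_iff (hw : 0 ≤ w) {X : I → S} {s : S} :
    fiberMass w X s = 0 ↔ ∀ i, X i = s → w i = 0 := by
  rw [fiberMass, Finset.sum_eq_zero_iff_of_nonneg fun i _ => by
    split_ifs <;> first | exact hw i | rfl]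
  simp

theorem exists_of_fiberMass_ne_zero {X : I → S} {s : S} (h : fiberMass w X s ≠ 0) :
    ∃ i, X i = s ∧ w i ≠ 0 := by
  obtain ⟨i, -, hi⟩ := Finset.exists_ne_zero_of_sum_ne_zero h
  by_cases hXi : X i = s
  · exact ⟨i, hXi, by simpa [hXi] using hi⟩
  · simp [hXi] at hi

theorem fiberMass_id [DecidableEq I] (w : I → ℝ) : fiberMass w id = w := by
  ext i
  simp [fiberMass]

variable [Fintype S]

theorem sum_fiberMass_mul (w : I → ℝ) (X : I → S) (f : S → ℝ) :
    ∑ s, fiberMass w X s * f s = ∑ i, w i * f (X i) := by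
  simp only [fiberMass, Finset.sum_mul, ite_mul, zero_mul]
  rw [Finset.sum_comm]
  simp

theorem sum_fiberMass (w : I → ℝ) (X : I → S) : ∑ s, fiberMass w X s = ∑ i, w i := by
  simpa using sum_fiberMass_mul w X 1

theorem fiberMass_comp [Fintype T] (w : I → ℝ) (X : I → S) (k : S → T) :
    fiberMass w (fun i => k (X i)) = fiberMass (fiberMass w X) k := by
  ext t
  have h := sum_fiberMass_mul w X fun s => if k s = t then 1 else 0
  simp only [mul_ite, mul_one, mul_zero] at h
  exact h.symm

theorem weightedEntropy_comp_of_injective [Fintype T] (w : I → ℝ) (X : I → S) {k : S → T}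
    (hk : Function.Injective k) :
    weightedEntropy w (fun i => k (X i)) = weightedEntropy w X := by
  rw [weightedEntropy, fiberMass_comp]
  refine (Fintype.sum_of_injective k hk _ _ (fun t ht => ?_) fun s => ?_).symm
  · have : ∀ s, k s ≠ t := fun s hs => ht ⟨s, hs⟩
    simp [fiberMass, this]
  · simp [fiberMass, hk.eq_iff]

theorem weightedEntropy_comp [Fintype T] (w : I → ℝ) (X : I → S) (k : S → T) :
    weightedEntropy w (fun i => k (X i)) = weightedEntropy (fiberMass w X) k := by
  rw [weightedEntropy, fiberMass_comp]
  rfl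

theorem sum_fiberMass_pair_fst (w : I → ℝ) (X : I → S) (Y : I → T) (t : T) :
    ∑ s, fiberMass w (fun i => (X i, Y i)) (s, t) = fiberMass w Y t := by
  simp only [fiberMass, Prod.mk.injEq]
  rw [Finset.sum_comm]
  simp [ite_and]

theorem weightedEntropy_le_log_card (hw : 0 ≤ w) (hw1 : ∑ i, w i = 1) (X : I → S) :
    weightedEntropy w X ≤ log (Fintype.card S) := by
  refine (sum_negMulLog_le_log_card (fiberMass_nonneg hw X) (by rw [sum_fiberMass, hw1]) univ
    fun s _ => mem_univ s).trans_eq ?_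
  rw [card_univ]

theorem weightedEntropy_pair_le [Fintype T] (hw : 0 ≤ w) (hw1 : ∑ i, w i = 1)
    (X : I → S) (Y : I → T) :
    weightedEntropy w (fun i => (X i, Y i)) ≤ weightedEntropy w X + weightedEntropy w Y := by
  set p := fiberMass w (fun i => (X i, Y i))
  have hsupp : ∀ u, p u ≠ 0 → fiberMass w X u.1 ≠ 0 ∧ fiberMass w Y u.2 ≠ 0 := by
    intro u hu
    obtain ⟨i, rfl, hi⟩ := exists_of_fiberMass_ne_zero hu
    exact ⟨fun h => hi ((fiberMass_eq_zero_iff hw).1 h i rfl),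
      fun h => hi ((fiberMass_eq_zero_iff hw).1 h i rfl)⟩
  have hlog : ∀ u, p u * log (fiberMass w X u.1 * fiberMass w Y u.2)
      = p u * log (fiberMass w X u.1) + p u * log (fiberMass w Y u.2) := by
    intro u
    by_cases hu : p u = 0
    · simp [hu]
    · rw [log_mul (hsupp u hu).1 (hsupp u hu).2, mul_add]
  calc weightedEntropy w (fun i => (X i, Y i))
      ≤ -∑ u, p u * log (fiberMass w X u.1 * fiberMass w Y u.2) :=
        sum_negMulLog_le_neg_sum_mul_log (fiberMass_nonneg hw _)
          (fun u => mul_nonneg (fiberMass_nonneg hw X _) (fiberMass_nonneg hw Y _))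
          (fun u hu => mul_ne_zero (hsupp u hu).1 (hsupp u hu).2)
          (by rw [sum_fiberMass, hw1])
          (by rw [Fintype.sum_prod_type, ← Fintype.sum_mul_sum, sum_fiberMass, sum_fiberMass,
            hw1, one_mul])
    _ = -∑ s, fiberMass w X s * log (fiberMass w X s)
        - ∑ t, fiberMass w Y t * log (fiberMass w Y t) := by
      simp only [hlog, Finset.sum_add_distrib, p, sum_fiberMass_mul]
      ring
    _ = weightedEntropy w X + weightedEntropy w Y := by
      simp only [weightedEntropy, negMulLog, neg_mul, Finset.sum_neg_distrib]
      ring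

theorem weightedEntropy_pair_le_add_sum_log_card [Fintype T] (hw : 0 ≤ w) (X : I → S)
    (Y : I → T) (A : T → Finset S) (hA : ∀ i, w i ≠ 0 → X i ∈ A (Y i)) :
    weightedEntropy w (fun i => (X i, Y i))
      ≤ weightedEntropy w Y + ∑ t, fiberMass w Y t * log #(A t) := by
  rw [weightedEntropy, weightedEntropy, Fintype.sum_prod_type_right, ← Finset.sum_add_distrib]
  set p := fiberMass w (fun i => (X i, Y i))
  refine Finset.sum_le_sum fun t _ => ?_
  set q := fiberMass w Y t
  rcases (fiberMass_nonneg hw Y t).eq_or_lt with hq | hq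
  · have hp : ∀ s, p (s, t) = 0 := fun s => (fiberMass_eq_zero_iff hw).2 fun i hi =>
      (fiberMass_eq_zero_iff hw).1 hq.symm i (congrArg Prod.snd hi)
    simp [hp, q, ← hq]
  have hcond : ∑ s, negMulLog (p (s, t) / q) ≤ log #(A t) := by
    refine sum_negMulLog_le_log_card (fun s => div_nonneg (fiberMass_nonneg hw _ _) hq.le)
      (by rw [← Finset.sum_div, sum_fiberMass_pair_fst, div_self hq.ne']) (A t) fun s hs => ?_
    obtain ⟨i, hi, hwi⟩ := exists_of_fiberMass_ne_zero (left_ne_zero_of_mul hs)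
    rw [Prod.mk.injEq] at hi
    exact hi.1 ▸ hi.2 ▸ hA i hwi
  have hsplit : ∀ s, negMulLog (p (s, t))
      = p (s, t) / q * negMulLog q + q * negMulLog (p (s, t) / q) := fun s => by
    rw [← negMulLog_mul, mul_div_cancel₀ _ hq.ne']
  rw [Finset.sum_congr rfl fun s _ => hsplit s, Finset.sum_add_distrib, ← Finset.sum_mul,
    ← Finset.sum_div, sum_fiberMass_pair_fst, div_self hq.ne', one_mul, ← Finset.mul_sum]
  gcongr

theorem weightedEntropy_pair_le_fano [Fintype T] (hw : 0 ≤ w) (hw1 : ∑ i, w i = 1)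
    (X : I → S) (Y : I → T) (G : T → S) (A : Finset S) (hA : ∀ i, w i ≠ 0 → X i ∈ A) :
    weightedEntropy w (fun i => (X i, Y i))
      ≤ weightedEntropy w Y + log 2 + (∑ i with G (Y i) ≠ X i, w i) * log #A := by
  let E : I → Bool := fun i => G (Y i) ≠ X i
  -- knowing `Y` and whether `G` errs, `X` lies in `A`, or is `G Y`
  let B : Bool × T → Finset S := fun u => if u.1 then A else {G u.2}
  have hinj : Function.Injective fun u : S × T => (u.1, (decide (G u.2 ≠ u.1), u.2)) :=
    fun u v h => by
      simp only [Prod.mk.injEq] at h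
      exact Prod.ext h.1 h.2.2
  calc weightedEntropy w (fun i => (X i, Y i))
      = weightedEntropy w (fun i => (X i, (E i, Y i))) :=
        (weightedEntropy_comp_of_injective w _ hinj).symm
    _ ≤ weightedEntropy w (fun i => (E i, Y i))
          + ∑ u, fiberMass w (fun i => (E i, Y i)) u * log #(B u) := by
        refine weightedEntropy_pair_le_add_sum_log_card hw _ _ B fun i hi => ?_
        by_cases h : G (Y i) = X i <;> simp [B, E, h, hA i hi]
    _ ≤ weightedEntropy w E + weightedEntropy w Y + ∑ i, w i * log #(B (E i, Y i)) := by
        rw [sum_fiberMass_mul]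
        gcongr
        exact weightedEntropy_pair_le hw hw1 E Y
    _ ≤ log 2 + weightedEntropy w Y + (∑ i with G (Y i) ≠ X i, w i) * log #A := by
        gcongr
        · simpa using weightedEntropy_le_log_card hw hw1 E
        · rw [Finset.sum_filter, Finset.sum_mul]
          refine le_of_eq (Finset.sum_congr rfl fun i _ => ?_)
          by_cases h : G (Y i) = X i <;> simp [B, E, h]
    _ = _ := by ring

theorem weightedEntropy_pi_le (hw : 0 ≤ w) (hw1 : ∑ i, w i = 1) :
    ∀ {n : ℕ} (X : I → Fin n → S), weightedEntropy w X ≤ ∑ j, weightedEntropy w (X · j)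
  | 0, X => by
    simpa using weightedEntropy_le_log_card hw hw1 X
  | n + 1, X => by
    have hinj : Function.Injective fun v : Fin (n + 1) → S => (v 0, Fin.tail v) :=
      (Fin.consEquiv fun _ => S).symm.injective
    calc weightedEntropy w X
        = weightedEntropy w (fun i => (X i 0, Fin.tail (X i))) :=
          (weightedEntropy_comp_of_injective w X hinj).symm
      _ ≤ weightedEntropy w (X · 0) + weightedEntropy w (fun i => Fin.tail (X i)) :=
          weightedEntropy_pair_le hw hw1 _ _
      _ ≤ weightedEntropy w (X · 0) + ∑ j : Fin n, weightedEntropy w (X · j.succ) :=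
          add_le_add_right (weightedEntropy_pi_le hw hw1 _) _
      _ = ∑ j, weightedEntropy w (X · j) :=
          (Fin.sum_univ_succ fun j => weightedEntropy w (X · j)).symm

theorem weightedEntropy_le_log_two_add (hw : 0 ≤ w) (hw1 : ∑ i, w i = 1)
    (U : I → ZMod 2 × ZMod 2) :
    weightedEntropy w U ≤ log 2 + weightedEntropy w (fun i => (U i).1 + (U i).2) := by
  have hinj : Function.Injective fun u : ZMod 2 × ZMod 2 => (u.1, u.1 + u.2) := by decide
  calc weightedEntropy w U
      = weightedEntropy w (fun i => ((U i).1, (U i).1 + (U i).2)) :=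
        (weightedEntropy_comp_of_injective w U hinj).symm
    _ ≤ weightedEntropy w (fun i => (U i).1) + weightedEntropy w (fun i => (U i).1 + (U i).2) :=
        weightedEntropy_pair_le hw hw1 _ _
    _ ≤ log 2 + weightedEntropy w (fun i => (U i).1 + (U i).2) := by
        gcongr
        simpa using weightedEntropy_le_log_card hw hw1 fun i => (U i).1

end WeightedEntropy

section Weights

variable {S T ι α : Type*}

theorem sum_negMulLog_mul_of_sum_eq_one [Fintype S] [Fintype T] {f : S → ℝ} {g : T → ℝ}
    (hf : ∑ s, f s = 1) (hg : ∑ t, g t = 1) :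
    ∑ x : S × T, negMulLog (f x.1 * g x.2) = ∑ s, negMulLog (f s) + ∑ t, negMulLog (g t) := by
  simp only [negMulLog_mul, Fintype.sum_prod_type, Finset.sum_add_distrib, ← Finset.sum_mul,
    ← Finset.mul_sum, hg, one_mul, hf]

theorem fiberMass_snd_mul [Fintype S] [Fintype T] [DecidableEq T] {f : S → ℝ}
    (hf : ∑ s, f s = 1) (g : T → ℝ) :
    fiberMass (fun x : S × T => f x.1 * g x.2) Prod.snd = g := by
  ext t
  simp [fiberMass, Fintype.sum_prod_type, ← Finset.sum_mul, hf]

noncomputable def uniformWeight [DecidableEq S] (A : Finset S) (s : S) : ℝ :=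
  if s ∈ A then (#A : ℝ)⁻¹ else 0

theorem uniformWeight_nonneg [DecidableEq S] (A : Finset S) : 0 ≤ uniformWeight A :=
  fun s => by unfold uniformWeight; positivity

theorem sum_uniformWeight [Fintype S] [DecidableEq S] {A : Finset S} (hA : A.Nonempty) :
    ∑ s, uniformWeight A s = 1 := by
  simp [uniformWeight, Finset.sum_ite_mem, hA.card_pos.ne']

theorem sum_negMulLog_uniformWeight [Fintype S] [DecidableEq S] (A : Finset S) :
    ∑ s, negMulLog (uniformWeight A s) = log #A := by
  rcases A.eq_empty_or_nonempty with rfl | hA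
  · simp [uniformWeight]
  have hcard : (#A : ℝ) ≠ 0 := by exact_mod_cast hA.card_pos.ne'
  have : ∀ s, negMulLog (uniformWeight A s) = if s ∈ A then negMulLog (#A : ℝ)⁻¹ else 0 :=
    fun s => by unfold uniformWeight; split_ifs <;> simp
  rw [Finset.sum_congr rfl fun s _ => this s, Finset.sum_ite_mem, univ_inter, sum_const,
    nsmul_eq_mul, negMulLog, log_inv]
  field_simp

noncomputable def piWeight [Fintype ι] (p : α → ℝ) (d : ι → α) : ℝ :=
  ∏ i, p (d i)

theorem piWeight_nonneg [Fintype ι] {p : α → ℝ} (hp : 0 ≤ p) : 0 ≤ piWeight (ι := ι) p :=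
  fun d => Finset.prod_nonneg fun i _ => hp (d i)

variable [Fintype ι] [DecidableEq ι] [Fintype α]

theorem sum_piWeight {p : α → ℝ} (hp1 : ∑ a, p a = 1) : ∑ d : ι → α, piWeight p d = 1 := by
  simp [piWeight, ← Fintype.prod_sum, hp1]

theorem fiberMass_piWeight_apply [DecidableEq α] {p : α → ℝ} (hp1 : ∑ a, p a = 1) (j : ι) :
    fiberMass (piWeight p) (fun d : ι → α => d j) = p := by
  ext a
  -- the fiber mass at `a` is `∏ i ∑ b, f i b`, whose `j`-th factor only keeps `b = a`
  let f : ι → α → ℝ := fun i b => if i = j then (if b = a then p b else 0) else p b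
  have hprod : ∀ d : ι → α, ∏ i, f i (d i) = if d j = a then piWeight p d else 0 := by
    intro d
    split_ifs with hd
    · exact Finset.prod_congr rfl fun i _ => by by_cases hi : i = j <;> simp [f, hi, hd]
    · exact Finset.prod_eq_zero (Finset.mem_univ j) (by simp [f, hd])
  have := Fintype.prod_sum f
  simp only [hprod] at this
  rw [fiberMass, ← this, Fintype.prod_eq_single j fun i hi => by simp [f, hi, hp1]]
  simp [f]

theorem sum_negMulLog_piWeight [DecidableEq α] {p : α → ℝ} (hp1 : ∑ a, p a = 1) :
    ∑ d : ι → α, negMulLog (piWeight p d) = Fintype.card ι * ∑ a, negMulLog (p a) := by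
  have hlog : ∀ d : ι → α, negMulLog (piWeight p d) = ∑ i, piWeight p d * -log (p (d i)) := by
    intro d
    by_cases hd : piWeight p d = 0
    · simp [hd]
    · have : ∀ i ∈ univ, p (d i) ≠ 0 := fun i _ h => hd (Finset.prod_eq_zero (mem_univ i) h)
      rw [negMulLog, piWeight, log_prod this, ← Finset.mul_sum, Finset.sum_neg_distrib]
      ring
  calc ∑ d, negMulLog (piWeight p d) = ∑ j, ∑ d, piWeight p d * -log (p (d j)) := by
        simp only [hlog]
        exact Finset.sum_comm
    _ = ∑ j : ι, ∑ a, p a * -log (p a) := Finset.sum_congr rfl fun j _ =>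
        (sum_fiberMass_mul (piWeight p) (fun d => d j) fun a => -log (p a)).symm.trans
          (by rw [fiberMass_piWeight_apply hp1 j])
    _ = Fintype.card ι * ∑ a, negMulLog (p a) := by
        simp [negMulLog]

end Weights

theorem PMF.sum_toReal_eq_one {α : Type*} [Fintype α] (P : PMF α) : ∑ a, (P a).toReal = 1 := by
  rw [← ENNReal.toReal_sum fun a _ => P.apply_ne_top a,
    ← tsum_fintype (L := SummationFilter.unconditional _), P.tsum_coe, ENNReal.toReal_one]

theorem distEntropySum_eq_weightedEntropy (P : PMF (ZMod 2 × ZMod 2)) :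
    distEntropySum P = weightedEntropy (fun a => (P a).toReal) (fun a => a.1 + a.2) := by
  simp only [distEntropySum, weightedEntropy, fiberMass]
  congr! with b
  rw [ENNReal.toReal_sum fun a _ => by split_ifs <;> simp [P.apply_ne_top]]
  simp only [apply_ite ENNReal.toReal, ENNReal.toReal_zero]

section Channel

variable {n : ℕ}

def channelOutput (c : Fin n → ZMod 2) (d : Fin n → ZMod 2 × ZMod 2) :
    Fin n → ZMod 2 × ZMod 2 :=
  fun j => (c j, c j) + d j

theorem injective_fst_channelOutput :
    Function.Injective fun x : (Fin n → ZMod 2) × (Fin n → ZMod 2 × ZMod 2) =>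
      (x.1, channelOutput x.1 x.2) := by
  rintro ⟨c, d⟩ ⟨c', d'⟩ h
  simp only [Prod.mk.injEq] at h
  obtain ⟨rfl, h⟩ := h
  exact Prod.ext rfl (funext fun j => add_left_cancel (congrFun h j))

theorem channelOutput_fst_add_snd (c : Fin n → ZMod 2) (d : Fin n → ZMod 2 × ZMod 2)
    (j : Fin n) :
    (channelOutput c d j).1 + (channelOutput c d j).2 = (d j).1 + (d j).2 := by
  have : ∀ a b e : ZMod 2, a + b + (a + e) = b + e := by decide
  exact this _ _ _

theorem weightedEntropy_channelOutput_le_sum {I : Type*} [Fintype I] {w : I → ℝ} (hw : 0 ≤ w)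
    (hw1 : ∑ i, w i = 1) (X : I → Fin n → ZMod 2) (N : I → Fin n → ZMod 2 × ZMod 2) :
    weightedEntropy w (fun i => channelOutput (X i) (N i))
      ≤ ∑ j, (log 2 + weightedEntropy w (fun i => (N i j).1 + (N i j).2)) := by
  refine (weightedEntropy_pi_le hw hw1 _).trans (Finset.sum_le_sum fun j _ => ?_)
  simpa only [channelOutput_fst_add_snd] using
    weightedEntropy_le_log_two_add hw hw1 fun i => channelOutput (X i) (N i) j

end Channel

theorem preimage_prodMk_singleton {Ω V W : Type*} (δ : Ω → V) (Δ : Ω → W) (x : V × W) :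
    (fun ω => (δ ω, Δ ω)) ⁻¹' {x} = δ ⁻¹' {x.1} ∩ Δ ⁻¹' {x.2} := by
  ext ω
  simp [Prod.ext_iff]

section CodeNoise

variable {V ι α : Type*} [DecidableEq V] [Fintype ι]

noncomputable def codeNoiseWeight (A : Finset V) (P : PMF α) (x : V × (ι → α)) : ℝ :=
  uniformWeight A x.1 * piWeight (fun a => (P a).toReal) x.2

theorem codeNoiseWeight_nonneg (A : Finset V) (P : PMF α) :
    0 ≤ codeNoiseWeight (ι := ι) A P := fun x =>
  mul_nonneg (uniformWeight_nonneg A x.1) (piWeight_nonneg (fun _ => ENNReal.toReal_nonneg) x.2)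

theorem mem_of_codeNoiseWeight_ne_zero {A : Finset V} {P : PMF α} {x : V × (ι → α)}
    (hx : codeNoiseWeight A P x ≠ 0) : x.1 ∈ A := by
  by_contra h
  exact hx (by simp [codeNoiseWeight, uniformWeight, h])

theorem sum_codeNoiseWeight [Fintype V] [DecidableEq ι] [Fintype α] {A : Finset V}
    (hA : A.Nonempty) (P : PMF α) : ∑ x, codeNoiseWeight (ι := ι) A P x = 1 := by
  simp only [codeNoiseWeight, Fintype.sum_prod_type, ← Finset.mul_sum,
    sum_piWeight P.sum_toReal_eq_one, mul_one, sum_uniformWeight hA]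

theorem fiberMass_codeNoiseWeight_snd [Fintype V] [DecidableEq ι] [Fintype α] [DecidableEq α]
    {A : Finset V} (hA : A.Nonempty) (P : PMF α) :
    fiberMass (codeNoiseWeight (ι := ι) A P) Prod.snd = piWeight fun a => (P a).toReal :=
  fiberMass_snd_mul (sum_uniformWeight hA) _

theorem measureReal_setOf_eq_sum_codeNoiseWeight {Ω : Type*} [MeasurableSpace Ω]
    {μ : Measure Ω} [IsFiniteMeasure μ] [Fintype V] [Fintype α] [DecidableEq ι] [DecidableEq α]
    {A : Finset V} {P : PMF α} {δ : Ω → V} {Δ : Ω → ι → α}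
    (hδm : ∀ c, MeasurableSet (δ ⁻¹' {c})) (hΔm : ∀ d, MeasurableSet (Δ ⁻¹' {d}))
    (hδmem : ∀ ω, δ ω ∈ A) (hδ : ∀ c ∈ A, μ (δ ⁻¹' {c}) = (#A : ENNReal)⁻¹)
    (hΔ : ∀ d, μ (Δ ⁻¹' {d}) = ∏ i, P (d i))
    (hindep : ∀ c d, μ (δ ⁻¹' {c} ∩ Δ ⁻¹' {d}) = μ (δ ⁻¹' {c}) * μ (Δ ⁻¹' {d}))
    (R : V × (ι → α) → Prop) [DecidablePred R] :
    μ.real {ω | R (δ ω, Δ ω)} = ∑ x with R x, codeNoiseWeight A P x := by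
  have hset : {ω | R (δ ω, Δ ω)} = (fun ω => (δ ω, Δ ω)) ⁻¹' ↑({x | R x} : Finset _) := by
    ext ω
    simp
  rw [hset, ← sum_measureReal_preimage_singleton _ fun x _ => by
    simpa only [preimage_prodMk_singleton] using (hδm x.1).inter (hΔm x.2)]
  refine Finset.sum_congr rfl fun x _ => ?_
  rw [measureReal_def, preimage_prodMk_singleton, hindep, ENNReal.toReal_mul, hΔ,
    ENNReal.toReal_prod, codeNoiseWeight]
  congr 1
  by_cases hc : x.1 ∈ A
  · simp [hδ _ hc, uniformWeight, hc]
  · have : δ ⁻¹' {x.1} = ∅ := Set.eq_empty_of_forall_notMem fun ω hω => hc (hω ▸ hδmem ω)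
    simp [this, uniformWeight, hc]

end CodeNoise

section BinaryCodeNoise

variable {n : ℕ} {A : Finset (Fin n → ZMod 2)}

theorem weightedEntropy_fst_channelOutput (hA : A.Nonempty) (P : PMF (ZMod 2 × ZMod 2)) :
    weightedEntropy (codeNoiseWeight A P) (fun x => (x.1, channelOutput x.1 x.2))
      = log #A + n * distEntropy P := by
  refine (weightedEntropy_comp_of_injective _ id injective_fst_channelOutput).trans ?_
  rw [weightedEntropy, fiberMass_id]
  simp only [codeNoiseWeight]
  rw [sum_negMulLog_mul_of_sum_eq_one (sum_uniformWeight hA) (sum_piWeight P.sum_toReal_eq_one),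
    sum_negMulLog_uniformWeight, sum_negMulLog_piWeight P.sum_toReal_eq_one, Fintype.card_fin]
  rfl

theorem weightedEntropy_channelOutput_le (hA : A.Nonempty) (P : PMF (ZMod 2 × ZMod 2)) :
    weightedEntropy (codeNoiseWeight A P) (fun x => channelOutput x.1 x.2)
      ≤ n * (log 2 + distEntropySum P) := by
  have hsum : ∀ j : Fin n,
      weightedEntropy (codeNoiseWeight A P) (fun x => (x.2 j).1 + (x.2 j).2) = distEntropySum P :=
    fun j => by
      rw [weightedEntropy_comp (codeNoiseWeight A P) (fun x => x.2 j) fun a => a.1 + a.2,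
        fiberMass_comp (codeNoiseWeight A P) Prod.snd (· j), fiberMass_codeNoiseWeight_snd hA,
        fiberMass_piWeight_apply P.sum_toReal_eq_one, distEntropySum_eq_weightedEntropy]
  refine (weightedEntropy_channelOutput_le_sum (codeNoiseWeight_nonneg A P)
    (sum_codeNoiseWeight hA P) Prod.fst Prod.snd).trans_eq ?_
  simp [hsum, mul_add]

end BinaryCodeNoise

theorem stmt_14_general {Ω : Type*} [MeasurableSpace Ω] (μ : Measure Ω) [IsProbabilityMeasure μ]
    (n : ℕ) (P : PMF (ZMod 2 × ZMod 2))
    (D : Submodule (ZMod 2) (Fin n → ZMod 2))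
    (δ : Ω → Fin n → ZMod 2) (Δ : Ω → Fin n → ZMod 2 × ZMod 2)
    (Z : Ω → Fin n → ZMod 2 × ZMod 2)
    (hδm : ∀ c, MeasurableSet (δ ⁻¹' {c}))
    (hΔm : ∀ d, MeasurableSet (Δ ⁻¹' {d}))
    (hδmem : ∀ ω, δ ω ∈ D)
    (hδ : ∀ c ∈ D, μ (δ ⁻¹' {c}) = (Nat.card D : ENNReal)⁻¹)
    (hΔ : ∀ d, μ (Δ ⁻¹' {d}) = ∏ i, P (d i))
    (hindep : ∀ c d, μ (δ ⁻¹' {c} ∩ Δ ⁻¹' {d}) = μ (δ ⁻¹' {c}) * μ (Δ ⁻¹' {d}))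
    (hZ : ∀ ω i, Z ω i = (δ ω i, δ ω i) + Δ ω i)
    (g : (Fin n → ZMod 2 × ZMod 2) → D) (ε : ℝ)
    (hε : ε = (μ {ω | (g (Z ω) : Fin n → ZMod 2) ≠ δ ω}).toReal) :
    (1 - ε) * Real.log (Nat.card D)
      ≤ n * (Real.log 2 + distEntropySum P - distEntropy P) + Real.log 2 := by
  classical
  set A : Finset (Fin n → ZMod 2) := {c | c ∈ D}
  have hA : Nat.card D = #A := by rw [Nat.card_eq_fintype_card, Fintype.card_subtype]
  have hAne : A.Nonempty := ⟨0, by simp [A]⟩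
  obtain rfl : Z = fun ω => channelOutput (δ ω) (Δ ω) := funext fun ω => funext (hZ ω)
  have herror : ε = ∑ x with (g (channelOutput x.1 x.2) : Fin n → ZMod 2) ≠ x.1,
      codeNoiseWeight A P x := by
    rw [hε, ← measureReal_def]
    refine measureReal_setOf_eq_sum_codeNoiseWeight hδm hΔm
      (fun ω => by simpa [A] using hδmem ω) (fun c hc => ?_) hΔ hindep
      fun x => (g (channelOutput x.1 x.2) : Fin n → ZMod 2) ≠ x.1
    rw [hδ c (by simpa [A] using hc), hA]
  have hfano := weightedEntropy_pair_le_fano (codeNoiseWeight_nonneg A P)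
    (sum_codeNoiseWeight hAne P) Prod.fst (fun x => channelOutput x.1 x.2)
    (fun z => (g z : Fin n → ZMod 2)) A fun _ hx => mem_of_codeNoiseWeight_ne_zero hx
  rw [← herror, weightedEntropy_fst_channelOutput hAne] at hfano
  have hout := weightedEntropy_channelOutput_le hAne P
  rw [hA]
  linarith

/-- Let `D = C₁ ⊓ C₂`, let `δ` be uniform on `D`, `Δ` i.i.d. with law `P`
independent of `δ`, and `Zᵢ = (δᵢ, δᵢ) + Δᵢ`.  For any decoder `g` with error probability
`ε = P[g(Z) ≠ δ]`, one has
`(1 - ε) · log |D| ≤ n · (log 2 + H_P(Δ⁽¹⁾ + Δ⁽²⁾) - H_P) + log 2`, the finite-blocklength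
form of the condition `log₂|C₁ ∩ C₂|/n ≤ I[X₀⁽¹⁾; X₀⁽¹⁾ + X₀⁽²⁾, Y₀]`. -/
theorem stmt_14 {Ω : Type*} [MeasurableSpace Ω] (μ : Measure Ω) [IsProbabilityMeasure μ]
    (n : ℕ) (P : PMF (ZMod 2 × ZMod 2))
    (C₁ C₂ : Submodule (ZMod 2) (Fin n → ZMod 2))
    (D : Submodule (ZMod 2) (Fin n → ZMod 2)) (hD : D = C₁ ⊓ C₂)
    (δ : Ω → Fin n → ZMod 2) (Δ : Ω → Fin n → ZMod 2 × ZMod 2)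
    (Z : Ω → Fin n → ZMod 2 × ZMod 2)
    (hδm : ∀ c, MeasurableSet (δ ⁻¹' {c}))
    (hΔm : ∀ d, MeasurableSet (Δ ⁻¹' {d}))
    (hδmem : ∀ ω, δ ω ∈ D)
    (hδ : ∀ c ∈ D, μ (δ ⁻¹' {c}) = (Nat.card D : ENNReal)⁻¹)
    (hΔ : ∀ d, μ (Δ ⁻¹' {d}) = ∏ i, P (d i))
    (hindep : ∀ c d, μ (δ ⁻¹' {c} ∩ Δ ⁻¹' {d}) = μ (δ ⁻¹' {c}) * μ (Δ ⁻¹' {d}))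
    (hZ : ∀ ω i, Z ω i = (δ ω i, δ ω i) + Δ ω i)
    (g : (Fin n → ZMod 2 × ZMod 2) → D) (ε : ℝ)
    (hε : ε = (μ {ω | (g (Z ω) : Fin n → ZMod 2) ≠ δ ω}).toReal) :
    (1 - ε) * Real.log (Nat.card D)
      ≤ n * (Real.log 2 + distEntropySum P - distEntropy P) + Real.log 2 :=
  stmt_14_general μ n P D δ Δ Z hδm hΔm hδmem hδ hΔ hindep hZ g ε hε
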